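/- arXiv:2310.11515 — 2 statements merged into one kernel-verified Lean document; each statement's English description precedes it below -/
import Mathlib

section
/- If λ ≥ max{1, L²}, then for every t ≥ 1, Δ_t ≤ (8 d² / p_min²) · log( (dλ + (t−1)L²) / d ). -/
/-!
`Δ_t` telescopes into the one-step gains `g_i = ℓ_{i+1}(θ̂_{i+1}) - ℓ_{i+1}(θ̂_i)` of the
follow-the-leader estimator. Write `u = θ̂_{i+1} - θ̂_i`, `c = ⟨ψ_i, u⟩` and
`M_i = λ I + ∑_{j<i} ψ_j ψ_jᵀ`. Since `log` is `1`-strongly concave on `(0, 1]`, comparing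
`θ̂_{i+1}` with the midpoint of `θ̂_i` and `θ̂_{i+1}` gives `g_i ≥ (uᵀ M_i u + c²) / 4`, while the
optimality of `θ̂_i` for `ℓ_i` leaves only the new term: `g_i ≤ log ⟨ψ_i, θ̂_{i+1}⟩ / ⟨ψ_i, θ̂_i⟩
≤ c / p_min`. Together with Cauchy–Schwarz `c² ≤ (ψ_iᵀ M_i⁻¹ ψ_i)(uᵀ M_i u)` this yields
`g_i ≤ (8 / p_min²) log (1 + ψ_iᵀ M_i⁻¹ ψ_i)`. By the matrix determinant lemma these logarithms
sum to `log det M_t - d log λ`, and AM–GM on the eigenvalues bounds `log det M_t` by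
`d log (tr M_t / d) ≤ d log ((dλ + (t-1)L²) / d)`.
-/

open Matrix Finset

namespace Real

theorem avg_log_add_sq_div_eight_le_log_avg {a b : ℝ} (ha : 0 < a) (hb : 0 < b)
    (hab : a + b ≤ 2) :
    (log a + log b) / 2 + (a - b) ^ 2 / 8 ≤ log ((a + b) / 2) := by
  set m := (a + b) / 2
  have hm : 0 < m := by positivity
  -- `log (ab/m²) ≤ ab/m² - 1 = -(a-b)²/(4m²)`, and `m ≤ 1`
  have hlog : log a + log b - 2 * log m ≤ -((a - b) ^ 2 / (4 * m ^ 2)) := by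
    have h := log_le_sub_one_of_pos (show 0 < a * b / m ^ 2 by positivity)
    rw [log_div (by positivity) (by positivity), log_mul ha.ne' hb.ne', log_pow] at h
    have : a * b / m ^ 2 - 1 = -((a - b) ^ 2 / (4 * m ^ 2)) := by
      field_simp; ring
    push_cast at h; linarith
  have hsq : (a - b) ^ 2 / 4 ≤ (a - b) ^ 2 / (4 * m ^ 2) := by
    have hm1 : m ≤ 1 := by simp only [m]; linarith
    apply div_le_div_of_nonneg_left (sq_nonneg _) (by positivity)
    nlinarith
  linarith

theorem min_one_le_two_mul_log_one_add {w : ℝ} (hw : 0 ≤ w) : min 1 w ≤ 2 * log (1 + w) := by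
  have h := le_log_one_add_of_nonneg hw
  rw [div_le_iff₀ (by positivity)] at h
  rcases le_total w 1 with hw1 | hw1
  · rw [min_eq_right hw1]; nlinarith
  · rw [min_eq_left hw1]; nlinarith

end Real

theorem le_four_div_sq_mul_min_one {g c Q w p : ℝ} (hp : 0 < p) (hQ : 0 ≤ Q) (hw : 0 ≤ w)
    (hlow : (Q + c ^ 2) / 4 ≤ g) (hup : g * p ≤ c) (hcs : c ^ 2 ≤ w * Q) :
    g ≤ 4 / p ^ 2 * min 1 w := by
  have hg : 0 ≤ g := le_trans (by positivity) hlow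
  have hgc : (g * p) ^ 2 ≤ c ^ 2 := pow_le_pow_left₀ (by positivity) hup 2
  rcases hg.eq_or_lt with rfl | hg
  · positivity
  -- `c² ≤ 4g` by `hlow` and `c² ≤ 4wg` by `hcs`
  have key : g * p ^ 2 ≤ 4 * min 1 w := by
    rcases min_cases 1 w with ⟨h, -⟩ | ⟨h, -⟩ <;> rw [h] <;>
      refine le_of_mul_le_mul_left ?_ hg <;> nlinarith
  rw [div_mul_eq_mul_div, le_div_iff₀ (by positivity)]
  linarith

namespace Matrix

variable {n : Type*} [Fintype n] [DecidableEq n]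

theorem det_add_vecMulVec {R : Type*} [CommRing R] {M : Matrix n n R} (hM : IsUnit M.det)
    (u v : n → R) : (M + vecMulVec u v).det = M.det * (1 + v ⬝ᵥ (M⁻¹ *ᵥ u)) := by
  rw [vecMulVec_eq Unit, det_add_replicateCol_mul_replicateRow hM, Matrix.mul_assoc,
    ← replicateCol_mulVec, det_unique (n := Unit)]
  simp [replicateRow_mul_replicateCol_apply]

theorem PosDef.sq_dotProduct_le {M : Matrix n n ℝ} (hM : M.PosDef) (p u : n → ℝ) :
    (p ⬝ᵥ u) ^ 2 ≤ (p ⬝ᵥ (M⁻¹ *ᵥ p)) * (u ⬝ᵥ (M *ᵥ u)) := by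
  have hMinv : M *ᵥ (M⁻¹ *ᵥ p) = p := by
    rw [mulVec_mulVec, mul_nonsing_inv _ (isUnit_iff_ne_zero.mpr hM.det_pos.ne'), one_mulVec]
  have hsymm : Mᵀ = M := by simpa using hM.isHermitian.eq
  have hB := (toBilin' M).apply_mul_apply_le_of_forall_zero_le
    (fun x => by simpa [toBilin'_apply'] using hM.posSemidef.dotProduct_mulVec_nonneg x)
    (M⁻¹ *ᵥ p) u
  simp only [toBilin'_apply', hMinv] at hB
  rw [dotProduct_mulVec, ← mulVec_transpose, hsymm, hMinv, dotProduct_comm u p,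
    dotProduct_comm (M⁻¹ *ᵥ p) p] at hB
  rwa [sq]

theorem PosDef.log_det_le [Nonempty n] {A : Matrix n n ℝ} (hA : A.PosDef) :
    Real.log A.det ≤ Fintype.card n * Real.log (A.trace / Fintype.card n) := by
  have hn : (0 : ℝ) < Fintype.card n := by exact_mod_cast Fintype.card_pos
  have hJ := (strictConcaveOn_log_Ioi.concaveOn).le_map_sum (t := Finset.univ)
    (w := fun _ => (Fintype.card n : ℝ)⁻¹) (p := hA.isHermitian.eigenvalues)
    (fun _ _ => by positivity) (by simp [hn.ne'])
    (fun i _ => hA.eigenvalues_pos i)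
  rw [hA.isHermitian.det_eq_prod_eigenvalues, hA.isHermitian.trace_eq_sum_eigenvalues]
  simp only [smul_eq_mul, ← Finset.mul_sum] at hJ
  simp only [RCLike.ofReal_real_eq_id, id]
  rw [Real.log_prod (fun i _ => (hA.eigenvalues_pos i).ne'), div_eq_inv_mul]
  rwa [← inv_mul_le_iff₀ hn]

end Matrix

section DesignMatrix

variable {ι n : Type*} [DecidableEq n]

def designMatrix (lam : ℝ) (s : Finset ι) (ψ : ι → n → ℝ) : Matrix n n ℝ :=
  lam • 1 + ∑ j ∈ s, vecMulVec (ψ j) (ψ j)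

variable {lam : ℝ} {s : Finset ι} {ψ : ι → n → ℝ}

theorem designMatrix_insert [DecidableEq ι] {i : ι} (hi : i ∉ s) :
    designMatrix lam (insert i s) ψ = designMatrix lam s ψ + vecMulVec (ψ i) (ψ i) := by
  rw [designMatrix, designMatrix, sum_insert hi]; abel

variable [Fintype n]

theorem designMatrix_posDef (hlam : 0 < lam) : (designMatrix lam s ψ).PosDef :=
  (PosDef.one.smul hlam).add_posSemidef <|
    posSemidef_sum s fun j _ => by simpa using posSemidef_vecMulVec_self_star (ψ j)

theorem dotProduct_designMatrix_mulVec (u : n → ℝ) :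
    u ⬝ᵥ (designMatrix lam s ψ *ᵥ u) = lam * (u ⬝ᵥ u) + ∑ j ∈ s, (ψ j ⬝ᵥ u) ^ 2 := by
  simp [designMatrix, add_mulVec, smul_mulVec, sum_mulVec, vecMulVec_mulVec, sq,
    dotProduct_comm u, sum_dotProduct]

theorem trace_designMatrix :
    (designMatrix lam s ψ).trace = lam * Fintype.card n + ∑ j ∈ s, ψ j ⬝ᵥ ψ j := by
  simp [designMatrix, trace_sum, trace_vecMulVec]

theorem log_det_designMatrix_le [Nonempty n] (hlam : 0 < lam) {L : ℝ}
    (hψ : ∀ j ∈ s, ψ j ⬝ᵥ ψ j ≤ L ^ 2) :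
    Real.log (designMatrix lam s ψ).det ≤
      Fintype.card n * Real.log ((Fintype.card n * lam + #s * L ^ 2) / Fintype.card n) := by
  have hn : (0 : ℝ) < Fintype.card n := by exact_mod_cast Fintype.card_pos
  have hA := designMatrix_posDef (s := s) (ψ := ψ) hlam
  refine hA.log_det_le.trans (mul_le_mul_of_nonneg_left ?_ hn.le)
  refine Real.log_le_log (div_pos (hA.trace_pos) hn) (div_le_div_of_nonneg_right ?_ hn.le)
  rw [trace_designMatrix, mul_comm lam, ← nsmul_eq_mul (#s)]
  exact add_le_add_right (sum_le_card_nsmul _ _ _ hψ) _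

end DesignMatrix

section LogLikelihood

variable {ι n : Type*} [Fintype n]

noncomputable def logLik (lam : ℝ) (s : Finset ι) (ψ : ι → n → ℝ) (θ : n → ℝ) : ℝ :=
  ∑ j ∈ s, Real.log (ψ j ⬝ᵥ θ) - lam / 2 * (θ ⬝ᵥ θ)

variable {lam : ℝ} {s : Finset ι} {ψ : ι → n → ℝ}

theorem logLik_insert [DecidableEq ι] {i : ι} (hi : i ∉ s) (θ : n → ℝ) :
    logLik lam (insert i s) ψ θ = logLik lam s ψ θ + Real.log (ψ i ⬝ᵥ θ) := by
  rw [logLik, logLik, sum_insert hi]; ring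

theorem isMaxOn_logLik_iff {P : Set (n → ℝ)} {θ₀ x : n → ℝ}
    (hpos : ∀ θ ∈ P, ∀ j ∈ s, 0 < ψ j ⬝ᵥ θ) (hθ₀ : θ₀ ∈ P) (hx : x ∈ P) :
    IsMaxOn (fun θ => ∑ j ∈ s, Real.log (ψ j ⬝ᵥ θ / ψ j ⬝ᵥ θ₀) - lam / 2 * (θ ⬝ᵥ θ)) P x ↔
      IsMaxOn (logLik lam s ψ) P x := by
  have h (θ) (hθ : θ ∈ P) : ∑ j ∈ s, Real.log (ψ j ⬝ᵥ θ / ψ j ⬝ᵥ θ₀) - lam / 2 * (θ ⬝ᵥ θ) =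
      logLik lam s ψ θ - ∑ j ∈ s, Real.log (ψ j ⬝ᵥ θ₀) := by
    rw [logLik, sum_congr rfl fun j hj => Real.log_div (hpos θ hθ j hj).ne' (hpos θ₀ hθ₀ j hj).ne',
      sum_sub_distrib]
    ring
  simp only [isMaxOn_iff]
  exact forall₂_congr fun θ hθ => by rw [h θ hθ, h x hx, sub_le_sub_iff_right]

theorem logLik_midpoint [DecidableEq n] {x z : n → ℝ} (hx : ∀ j ∈ s, 0 < ψ j ⬝ᵥ x)
    (hz : ∀ j ∈ s, 0 < ψ j ⬝ᵥ z) (hxz : ∀ j ∈ s, ψ j ⬝ᵥ x + ψ j ⬝ᵥ z ≤ 2) :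
    (logLik lam s ψ x + logLik lam s ψ z) / 2 + (z - x) ⬝ᵥ (designMatrix lam s ψ *ᵥ (z - x)) / 8 ≤
      logLik lam s ψ (midpoint ℝ x z) := by
  have hdot (v : n → ℝ) : v ⬝ᵥ midpoint ℝ x z = (v ⬝ᵥ x + v ⬝ᵥ z) / 2 := by
    rw [midpoint_eq_smul_add, dotProduct_smul, dotProduct_add, smul_eq_mul, invOf_eq_inv]; ring
  have hlog : ∑ j ∈ s, ((Real.log (ψ j ⬝ᵥ x) + Real.log (ψ j ⬝ᵥ z)) / 2 +
      (ψ j ⬝ᵥ (z - x)) ^ 2 / 8) ≤ ∑ j ∈ s, Real.log (ψ j ⬝ᵥ midpoint ℝ x z) := by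
    refine sum_le_sum fun j hj => ?_
    rw [hdot, dotProduct_sub, ← neg_sub, neg_sq]
    exact Real.avg_log_add_sq_div_eight_le_log_avg (hx j hj) (hz j hj) (hxz j hj)
  have hreg : midpoint ℝ x z ⬝ᵥ midpoint ℝ x z + (z - x) ⬝ᵥ (z - x) / 4 =
      (x ⬝ᵥ x + z ⬝ᵥ z) / 2 := by
    rw [hdot, dotProduct_comm _ x, dotProduct_comm _ z, hdot, hdot]
    simp only [dotProduct_sub, sub_dotProduct, dotProduct_comm z x]
    ring
  rw [dotProduct_designMatrix_mulVec]
  simp only [logLik, sum_add_distrib, ← sum_div] at hlog ⊢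
  linear_combination hlog + lam / 2 * hreg

theorem logLik_insert_sub_le_of_isMaxOn [DecidableEq ι] [DecidableEq n] {P : Set (n → ℝ)}
    (hP : Convex ℝ P) {p : ℝ} (hp : 0 < p) (hlam : 0 < lam) {i : ι} (hi : i ∉ s)
    (hpψ : ∀ θ ∈ P, ∀ j ∈ insert i s, p ≤ ψ j ⬝ᵥ θ)
    (hψ1 : ∀ θ ∈ P, ∀ j ∈ insert i s, ψ j ⬝ᵥ θ ≤ 1)
    {x z : n → ℝ} (hxP : x ∈ P) (hzP : z ∈ P)
    (hx : IsMaxOn (logLik lam s ψ) P x) (hz : IsMaxOn (logLik lam (insert i s) ψ) P z) :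
    logLik lam (insert i s) ψ z - logLik lam (insert i s) ψ x ≤
      8 / p ^ 2 * Real.log (1 + ψ i ⬝ᵥ ((designMatrix lam s ψ)⁻¹ *ᵥ ψ i)) := by
  set g := logLik lam (insert i s) ψ z - logLik lam (insert i s) ψ x
  set Q := (z - x) ⬝ᵥ (designMatrix lam s ψ *ᵥ (z - x))
  set c := ψ i ⬝ᵥ (z - x)
  set w := ψ i ⬝ᵥ ((designMatrix lam s ψ)⁻¹ *ᵥ ψ i)
  have hM := designMatrix_posDef (s := s) (ψ := ψ) hlam
  have hQ : 0 ≤ Q := by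
    simpa only [star_trivial] using hM.posSemidef.dotProduct_mulVec_nonneg (z - x)
  have hw : 0 ≤ w := by simpa using hM.inv.posSemidef.dotProduct_mulVec_nonneg (ψ i)
  have hpos (θ) (hθ : θ ∈ P) (j) (hj : j ∈ insert i s) : 0 < ψ j ⬝ᵥ θ :=
    hp.trans_le (hpψ θ hθ j hj)
  -- `z` beats the midpoint, at which the new objective is strongly concave
  have hlow : (Q + c ^ 2) / 4 ≤ g := by
    have hconc := logLik_midpoint (lam := lam) (hpos x hxP) (hpos z hzP)
      fun j hj => add_le_add (hψ1 x hxP j hj) (hψ1 z hzP j hj) |>.trans_eq one_add_one_eq_two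
    have hmid := isMaxOn_iff.1 hz _ (hP.midpoint_mem hxP hzP)
    rw [dotProduct_designMatrix_mulVec, sum_insert hi, ← add_assoc, add_comm _ (c ^ 2),
      add_assoc, ← dotProduct_designMatrix_mulVec] at hconc
    linarith
  -- `z` does not beat `x` on the old objective, so the gain comes from the new term
  have hup : g * p ≤ c := by
    have hold := isMaxOn_iff.1 hx z hzP
    have hx0 := hpos x hxP i (mem_insert_self i s)
    have hlog := Real.log_le_sub_one_of_pos (div_pos (hpos z hzP i (mem_insert_self i s)) hx0)
    rw [Real.log_div (hpos z hzP i (mem_insert_self i s)).ne' hx0.ne'] at hlog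
    have hc : c / (ψ i ⬝ᵥ x) = ψ i ⬝ᵥ z / ψ i ⬝ᵥ x - 1 := by
      rw [show c = _ from dotProduct_sub _ _ _, sub_div, div_self hx0.ne']
    have hg : g ≤ c / (ψ i ⬝ᵥ x) := by
      simp only [g, logLik_insert hi]
      linarith
    calc g * p ≤ g * (ψ i ⬝ᵥ x) := by
          gcongr
          exacts [sub_nonneg.2 (isMaxOn_iff.1 hz x hxP), hpψ x hxP i (mem_insert_self i s)]
      _ ≤ c := (le_div_iff₀ hx0).1 hg
  calc g ≤ 4 / p ^ 2 * min 1 w :=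
        le_four_div_sq_mul_min_one hp hQ hw hlow hup (hM.sq_dotProduct_le _ _)
    _ ≤ 4 / p ^ 2 * (2 * Real.log (1 + w)) := by
        gcongr; exact Real.min_one_le_two_mul_log_one_add hw
    _ = 8 / p ^ 2 * Real.log (1 + w) := by ring

end LogLikelihood

section Sequential

variable {n : Type*} [Fintype n] {lam : ℝ} {ψ : ℕ → n → ℝ}

theorem sum_logLik_Ico_succ_sub (θ : ℕ → n → ℝ) {a t : ℕ} (hat : a ≤ t) :
    ∑ i ∈ Ico a t, (logLik lam (Ico a (i + 1)) ψ (θ (i + 1)) - logLik lam (Ico a (i + 1)) ψ (θ i)) =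
      ∑ i ∈ Ico a t, (Real.log (ψ i ⬝ᵥ θ t) - Real.log (ψ i ⬝ᵥ θ i)) -
        lam / 2 * (θ t ⬝ᵥ θ t - θ a ⬝ᵥ θ a) := by
  induction t, hat using Nat.le_induction with
  | base => simp
  | succ t hat ih =>
    rw [sum_Ico_succ_top hat, ih]
    simp only [logLik, sum_Ico_succ_top hat, sum_sub_distrib]
    ring

variable [DecidableEq n]

theorem sum_log_one_add_eq_log_det_designMatrix (hlam : 0 < lam) {a t : ℕ}
    (hat : a ≤ t) :
    ∑ i ∈ Ico a t, Real.log (1 + ψ i ⬝ᵥ ((designMatrix lam (Ico a i) ψ)⁻¹ *ᵥ ψ i)) =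
      Real.log (designMatrix lam (Ico a t) ψ).det - Fintype.card n * Real.log lam := by
  induction t, hat using Nat.le_induction with
  | base => simp [designMatrix, Real.log_pow]
  | succ t hat ih =>
    have hA := designMatrix_posDef (s := Ico a t) (ψ := ψ) hlam
    have hw : 0 ≤ ψ t ⬝ᵥ ((designMatrix lam (Ico a t) ψ)⁻¹ *ᵥ ψ t) := by
      simpa using hA.inv.posSemidef.dotProduct_mulVec_nonneg (ψ t)
    rw [sum_Ico_succ_top hat, ih, Nat.Ico_succ_right_eq_insert_Ico hat,
      designMatrix_insert (by simp), det_add_vecMulVec (isUnit_iff_ne_zero.mpr hA.det_pos.ne'),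
      Real.log_mul hA.det_pos.ne' (by positivity)]
    ring

theorem regret_le_of_isMaxOn_logLik [Nonempty n] {p L : ℝ} (hlam : 0 < lam) (hp : 0 < p)
    {P : Set (n → ℝ)} (hP : Convex ℝ P) (hpψ : ∀ θ ∈ P, ∀ i, p ≤ ψ i ⬝ᵥ θ)
    (hψ1 : ∀ θ ∈ P, ∀ i, ψ i ⬝ᵥ θ ≤ 1) (hψL : ∀ i, ψ i ⬝ᵥ ψ i ≤ L ^ 2)
    {θ : ℕ → n → ℝ} (hθP : ∀ i, θ i ∈ P) {a t : ℕ} (hat : a ≤ t)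
    (hθ : ∀ i ∈ Icc a t, IsMaxOn (logLik lam (Ico a i) ψ) P (θ i)) :
    ∑ i ∈ Ico a t, (Real.log (ψ i ⬝ᵥ θ t) - Real.log (ψ i ⬝ᵥ θ i)) -
        lam / 2 * (θ t ⬝ᵥ θ t - θ a ⬝ᵥ θ a) ≤
      8 / p ^ 2 * (Fintype.card n *
        Real.log ((Fintype.card n * lam + (t - a) * L ^ 2) / Fintype.card n) -
        Fintype.card n * Real.log lam) := by
  have hstep (i) (hi : i ∈ Ico a t) :
      logLik lam (Ico a (i + 1)) ψ (θ (i + 1)) - logLik lam (Ico a (i + 1)) ψ (θ i) ≤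
        8 / p ^ 2 * Real.log (1 + ψ i ⬝ᵥ ((designMatrix lam (Ico a i) ψ)⁻¹ *ᵥ ψ i)) := by
    obtain ⟨hai, hit⟩ := mem_Ico.1 hi
    have hnext := hθ (i + 1) (mem_Icc.2 ⟨by omega, hit⟩)
    rw [Nat.Ico_succ_right_eq_insert_Ico hai] at hnext ⊢
    exact logLik_insert_sub_le_of_isMaxOn hP hp hlam (by simp) (fun θ hθ j _ => hpψ θ hθ j)
      (fun θ hθ j _ => hψ1 θ hθ j) (hθP i) (hθP (i + 1)) (hθ i (mem_Icc.2 ⟨hai, hit.le⟩)) hnext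
  have hlogdet := log_det_designMatrix_le (lam := lam) (s := Ico a t) hlam fun j _ => hψL j
  rw [Nat.card_Ico, Nat.cast_sub hat] at hlogdet
  calc _ = ∑ i ∈ Ico a t,
        (logLik lam (Ico a (i + 1)) ψ (θ (i + 1)) - logLik lam (Ico a (i + 1)) ψ (θ i)) :=
        (sum_logLik_Ico_succ_sub θ hat).symm
    _ ≤ ∑ i ∈ Ico a t,
        8 / p ^ 2 * Real.log (1 + ψ i ⬝ᵥ ((designMatrix lam (Ico a i) ψ)⁻¹ *ᵥ ψ i)) :=
        sum_le_sum hstep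
    _ = 8 / p ^ 2 * (Real.log (designMatrix lam (Ico a t) ψ).det -
        Fintype.card n * Real.log lam) := by
        rw [← mul_sum, sum_log_one_add_eq_log_det_designMatrix hlam hat]
    _ ≤ _ := by gcongr

end Sequential

theorem vbmle_Delta_upper_bound_general
    (d : ℕ) (hd : 1 ≤ d)
    (lam L pmin : ℝ)
    (hpmin0 : 0 < pmin)
    (hlam' : max 1 (L ^ 2) ≤ lam)
    (S A : Type) [Fintype S]
    (φ : S → A → S → (Fin d → ℝ))
    (hφ : ∀ s a s', Real.sqrt (φ s a s' ⬝ᵥ φ s a s') ≤ L)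
    (P : Set (Fin d → ℝ)) (hPconv : Convex ℝ P)
    (hPsum : ∀ θ ∈ P, ∀ s a, (∑ s', φ s a s' ⬝ᵥ θ) = 1)
    (hPmin : ∀ θ ∈ P, ∀ s a s', pmin ≤ φ s a s' ⬝ᵥ θ)
    (θstar : Fin d → ℝ) (hθstar : θstar ∈ P)
    (s : ℕ → S) (a : ℕ → A)
    (ℓ : ℕ → (Fin d → ℝ) → ℝ)
    (hℓ : ∀ t θ, ℓ t θ =
      (∑ i ∈ Finset.Icc 1 (t - 1),
        Real.log ((φ (s i) (a i) (s (i + 1)) ⬝ᵥ θ) / (φ (s i) (a i) (s (i + 1)) ⬝ᵥ θstar)))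
      - lam / 2 * (θ ⬝ᵥ θ))
    (θhat : ℕ → (Fin d → ℝ))
    (hθhatmem : ∀ t, θhat t ∈ P)
    (hθhatmax : ∀ t, 1 ≤ t → ∀ θ ∈ P, ℓ t θ ≤ ℓ t (θhat t))
    (hθhat0 : θhat 0 = θhat 1)
    (Δ : ℕ → ℝ)
    (hΔ : ∀ t, Δ t =
      (∑ i ∈ Finset.Icc 1 (t - 1),
        Real.log ((φ (s i) (a i) (s (i + 1)) ⬝ᵥ θhat t) / (φ (s i) (a i) (s (i + 1)) ⬝ᵥ θhat i)))
      - lam / 2 * ((θhat t ⬝ᵥ θhat t) - (θhat 0 ⬝ᵥ θhat 0))) :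
    ∀ t, 1 ≤ t →
      Δ t ≤ 8 * (d : ℝ) ^ 2 / pmin ^ 2 *
        Real.log (((d : ℝ) * lam + ((t : ℝ) - 1) * L ^ 2) / (d : ℝ)) := by
  intro t ht
  set ψ : ℕ → Fin d → ℝ := fun i => φ (s i) (a i) (s (i + 1))
  have : Nonempty (Fin d) := ⟨⟨0, hd⟩⟩
  have hlam1 : 1 ≤ lam := le_of_max_le_left hlam'
  have hIcc (t : ℕ) : Icc 1 (t - 1) = Ico 1 t := by ext; simp only [mem_Icc, mem_Ico]; omega
  have hpos (θ) (hθ : θ ∈ P) (i) : 0 < ψ i ⬝ᵥ θ := hpmin0.trans_le (hPmin θ hθ _ _ _)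
  have hψ1 (θ) (hθ : θ ∈ P) (i) : ψ i ⬝ᵥ θ ≤ 1 := hPsum θ hθ (s i) (a i) ▸
    single_le_sum (fun s' _ => (hpmin0.trans_le (hPmin θ hθ (s i) (a i) s')).le)
      (mem_univ (s (i + 1)))
  have hmax (i) (hi : i ∈ Icc 1 t) : IsMaxOn (logLik lam (Ico 1 i) ψ) P (θhat i) := by
    rw [← isMaxOn_logLik_iff (fun θ hθ j _ => hpos θ hθ j) hθstar (hθhatmem i), ← hIcc]
    exact isMaxOn_iff.2 fun θ hθ => by simpa only [hℓ] using hθhatmax i (mem_Icc.1 hi).1 θ hθ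
  have hΔ' : Δ t = ∑ i ∈ Ico 1 t, (Real.log (ψ i ⬝ᵥ θhat t) - Real.log (ψ i ⬝ᵥ θhat i)) -
      lam / 2 * (θhat t ⬝ᵥ θhat t - θhat 1 ⬝ᵥ θhat 1) := by
    rw [hΔ, hIcc, hθhat0, sum_congr rfl fun i _ =>
      Real.log_div (hpos _ (hθhatmem t) i).ne' (hpos _ (hθhatmem i) i).ne']
  have hd1 : (1 : ℝ) ≤ d := by exact_mod_cast hd
  have hX : 0 ≤ Real.log ((d * lam + (t - 1) * L ^ 2) / d) :=
    Real.log_nonneg <| (one_le_div (by positivity)).2 <|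
      by nlinarith [sq_nonneg L, (Nat.one_le_cast.2 ht : (1 : ℝ) ≤ t)]
  calc Δ t ≤ _ := hΔ' ▸ regret_le_of_isMaxOn_logLik (by linarith) hpmin0 hPconv
        (fun θ hθ i => hPmin θ hθ _ _ _) hψ1 (fun i => (Real.sqrt_le_iff.1 (hφ _ _ _)).2)
        hθhatmem ht hmax
    _ ≤ 8 / pmin ^ 2 * ((d : ℝ) ^ 2 * Real.log ((d * lam + (t - 1) * L ^ 2) / d)) := by
        simp only [Fintype.card_fin, Nat.cast_one]
        gcongr
        nlinarith [Real.log_nonneg hlam1, mul_nonneg (sub_nonneg.2 hd1) hX]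
    _ = _ := by ring

/-- regret of online learning / bound on `Δ_t`: if `λ ≥ max{1, L²}`,
then for every `t ≥ 1`, `Δ_t ≤ (8 d² / p_min²) · log((dλ + (t−1)L²)/d)`. -/
theorem vbmle_Delta_upper_bound
    (d : ℕ) (hd : 1 ≤ d)
    (lam L pmin : ℝ) (hlam : 0 ≤ lam) (hL : 0 < L)
    (hpmin0 : 0 < pmin) (hpmin1 : pmin ≤ 1)
    (hlam' : max 1 (L ^ 2) ≤ lam)
    (S A : Type) [Fintype S] [Nonempty S] [Fintype A] [Nonempty A]
    (φ : S → A → S → (Fin d → ℝ))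
    (hφ : ∀ s a s', Real.sqrt (φ s a s' ⬝ᵥ φ s a s') ≤ L)
    (P : Set (Fin d → ℝ)) (hPne : P.Nonempty) (hPcomp : IsCompact P) (hPconv : Convex ℝ P)
    (hPsum : ∀ θ ∈ P, ∀ s a, (∑ s', φ s a s' ⬝ᵥ θ) = 1)
    (hPmin : ∀ θ ∈ P, ∀ s a s', pmin ≤ φ s a s' ⬝ᵥ θ)
    (θstar : Fin d → ℝ) (hθstar : θstar ∈ P)
    (s : ℕ → S) (a : ℕ → A)
    (ℓ : ℕ → (Fin d → ℝ) → ℝ)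
    (hℓ : ∀ t θ, ℓ t θ =
      (∑ i ∈ Finset.Icc 1 (t - 1),
        Real.log ((φ (s i) (a i) (s (i + 1)) ⬝ᵥ θ) / (φ (s i) (a i) (s (i + 1)) ⬝ᵥ θstar)))
      - lam / 2 * (θ ⬝ᵥ θ))
    (θhat : ℕ → (Fin d → ℝ))
    (hθhatmem : ∀ t, θhat t ∈ P)
    (hθhatmax : ∀ t, 1 ≤ t → ∀ θ ∈ P, ℓ t θ ≤ ℓ t (θhat t))
    (hθhat0 : θhat 0 = θhat 1)
    (Δ : ℕ → ℝ)
    (hΔ : ∀ t, Δ t =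
      (∑ i ∈ Finset.Icc 1 (t - 1),
        Real.log ((φ (s i) (a i) (s (i + 1)) ⬝ᵥ θhat t) / (φ (s i) (a i) (s (i + 1)) ⬝ᵥ θhat i)))
      - lam / 2 * ((θhat t ⬝ᵥ θhat t) - (θhat 0 ⬝ᵥ θhat 0))) :
    ∀ t, 1 ≤ t →
      Δ t ≤ 8 * (d : ℝ) ^ 2 / pmin ^ 2 *
        Real.log (((d : ℝ) * lam + ((t : ℝ) - 1) * L ^ 2) / (d : ℝ)) :=
  vbmle_Delta_upper_bound_general d hd lam L pmin hpmin0 hlam' S A φ hφ P hPconv hPsum hPmin θstar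
    hθstar s a ℓ hℓ θhat hθhatmem hθhatmax hθhat0 Δ hΔ
end

section
/- Let K ⊆ ℝ^d be convex, let f, g : ℝ^d → ℝ be differentiable, let x ∈ K be a maximizer of f over K, and let y ∈ K be a maximizer of f + g over K. Suppose A is a positive definite d×d matrix such that the strong-concavity (Taylor) bound (f+g)(y) ≤ (f+g)(x) + ⟨∇(f+g)(x), y − x⟩ − (1/2)‖y − x‖²_A holds. Then ‖y − x‖_A ≤ 2 ‖∇g(x)‖_{A^{−1}}. (This is the one-step stability bound for constrained maximum likelihood estimators.) -/
/-!
First-order optimality of `x` for `f` on the convex set `K` gives `⟪∇f(x), y - x⟫ ≤ 0`, and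
optimality of `y` for `f + g` gives `(f + g)(x) ≤ (f + g)(y)`. Fed into the Taylor bound these
leave `½‖y - x‖²_A ≤ ⟪∇g(x), y - x⟫ ≤ ‖∇g(x)‖_{A⁻¹} ‖y - x‖_A`, the last step being
Cauchy–Schwarz for the dual pair of norms `‖·‖_A`, `‖·‖_{A⁻¹}`; now cancel one factor `‖y - x‖_A`.
-/

open Matrix
open scoped RealInnerProductSpace

namespace Matrix

variable {n : Type*} [Fintype n]

theorem PosSemidef.dotProduct_mulVec_sq_le {M : Matrix n n ℝ} (hM : M.PosSemidef)
    (u v : n → ℝ) : (u ⬝ᵥ M *ᵥ v) ^ 2 ≤ (u ⬝ᵥ M *ᵥ u) * (v ⬝ᵥ M *ᵥ v) := by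
  have hsymm : v ⬝ᵥ M *ᵥ u = u ⬝ᵥ M *ᵥ v := by
    rw [dotProduct_mulVec, ← mulVec_transpose, (isHermitian_iff_isSymm.1 hM.isHermitian).eq,
      dotProduct_comm]
  have hquad : ∀ t : ℝ,
      0 ≤ (u ⬝ᵥ M *ᵥ u) * (t * t) + 2 * (u ⬝ᵥ M *ᵥ v) * t + v ⬝ᵥ M *ᵥ v := by
    intro t
    have h := hM.dotProduct_mulVec_nonneg (t • u + v)
    simp only [star_trivial, mulVec_add, mulVec_smul, add_dotProduct, dotProduct_add,
      smul_dotProduct, dotProduct_smul, smul_eq_mul, hsymm] at h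
    linarith
  have h := discrim_le_zero hquad
  rw [discrim] at h
  linarith

theorem PosDef.dotProduct_sq_le [DecidableEq n] {A : Matrix n n ℝ} (hA : A.PosDef)
    (u v : n → ℝ) : (u ⬝ᵥ v) ^ 2 ≤ (u ⬝ᵥ A⁻¹ *ᵥ u) * (v ⬝ᵥ A *ᵥ v) := by
  have hAA : A *ᵥ (A⁻¹ *ᵥ u) = u := by
    rw [mulVec_mulVec, mul_nonsing_inv A (isUnit_iff_ne_zero.2 hA.det_pos.ne'), one_mulVec]
  have hpair : ∀ w, A⁻¹ *ᵥ u ⬝ᵥ A *ᵥ w = u ⬝ᵥ w := fun w => by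
    rw [dotProduct_mulVec, ← mulVec_transpose, (isHermitian_iff_isSymm.1 hA.isHermitian).eq,
      hAA]
  simpa only [hpair, dotProduct_comm u] using hA.posSemidef.dotProduct_mulVec_sq_le (A⁻¹ *ᵥ u) v

theorem PosDef.dotProduct_le_sqrt_mul_sqrt [DecidableEq n] {A : Matrix n n ℝ} (hA : A.PosDef)
    (u v : n → ℝ) : u ⬝ᵥ v ≤ √(u ⬝ᵥ A⁻¹ *ᵥ u) * √(v ⬝ᵥ A *ᵥ v) := by
  rw [← Real.sqrt_mul (by simpa using hA.inv.posSemidef.dotProduct_mulVec_nonneg u)]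
  exact (le_abs_self _).trans (Real.abs_le_sqrt (hA.dotProduct_sq_le u v))

end Matrix

section Gradient

variable {E : Type*} [NormedAddCommGroup E] [InnerProductSpace ℝ E] [CompleteSpace E]
  {f g : E → ℝ} {x : E}

theorem gradient_fun_add (hf : DifferentiableAt ℝ f x) (hg : DifferentiableAt ℝ g x) :
    gradient (fun w => f w + g w) x = gradient f x + gradient g x :=
  ext_inner_right ℝ fun v => by simp [inner_add_left, fderiv_fun_add hf hg]

theorem IsMaxOn.inner_gradient_sub_nonpos {K : Set E} {y : E} (hmax : IsMaxOn f K x)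
    (hK : Convex ℝ K) (hx : x ∈ K) (hy : y ∈ K) (hf : DifferentiableAt ℝ f x) :
    ⟪gradient f x, y - x⟫ ≤ 0 := by
  rw [inner_gradient_left]
  exact hmax.localize.hasFDerivWithinAt_nonpos hf.hasFDerivAt.hasFDerivWithinAt
    (sub_mem_posTangentConeAt_of_segment_subset (hK.segment_subset hx hy))

end Gradient

/-- one-step stability bound for constrained maximizers: if `x`
maximizes `f` over the convex set `K`, `y` maximizes `f + g` over `K`, and the
strong-concavity Taylor bound holds with a positive definite matrix `A`, then
`‖y − x‖_A ≤ 2 ‖∇g(x)‖_{A⁻¹}`. -/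
theorem stability_of_constrained_maximizers
    (d : ℕ)
    (K : Set (EuclideanSpace ℝ (Fin d))) (hK : Convex ℝ K)
    (f g : EuclideanSpace ℝ (Fin d) → ℝ)
    (hf : Differentiable ℝ f) (hg : Differentiable ℝ g)
    (x : EuclideanSpace ℝ (Fin d)) (hxK : x ∈ K)
    (hxmax : ∀ w ∈ K, f w ≤ f x)
    (y : EuclideanSpace ℝ (Fin d)) (hyK : y ∈ K)
    (hymax : ∀ w ∈ K, f w + g w ≤ f y + g y)
    (A : Matrix (Fin d) (Fin d) ℝ) (hA : A.PosDef)
    (htaylor : f y + g y ≤ f x + g x + ⟪gradient (fun w => f w + g w) x, y - x⟫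
      - 1 / 2 * ((y - x) ⬝ᵥ A *ᵥ (y - x))) :
    Real.sqrt ((y - x) ⬝ᵥ A *ᵥ (y - x)) ≤
      2 * Real.sqrt ((gradient g x : EuclideanSpace ℝ (Fin d)) ⬝ᵥ A⁻¹ *ᵥ (gradient g x : EuclideanSpace ℝ (Fin d))) := by
  set q := (y - x) ⬝ᵥ A *ᵥ (y - x)
  set b := (gradient g x).ofLp ⬝ᵥ A⁻¹ *ᵥ (gradient g x).ofLp
  have hopt := (isMaxOn_iff.2 hxmax).inner_gradient_sub_nonpos hK hxK hyK (hf x)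
  have hgrowth : 1 / 2 * q ≤ ⟪gradient g x, y - x⟫ := by
    rw [gradient_fun_add (hf x) (hg x), inner_add_left] at htaylor
    linarith [hymax x hxK]
  have hcs : ⟪gradient g x, y - x⟫ ≤ √b * √q := by
    rw [EuclideanSpace.inner_eq_star_dotProduct, star_trivial, dotProduct_comm]
    exact hA.dotProduct_le_sqrt_mul_sqrt _ _
  have hq : 0 ≤ q := by
    have h := hA.posSemidef.dotProduct_mulVec_nonneg (y - x).ofLp
    rwa [star_trivial] at h
  -- `√q ^ 2 / 2 ≤ √b * √q`, and `√q ≥ 0` may be cancelled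
  nlinarith [Real.sqrt_nonneg b, Real.sqrt_nonneg q, Real.sq_sqrt hq]
end
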